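/- arXiv:2309.06413 — 4 statements merged into one kernel-verified Lean document; each statement's English description precedes it below -/
import Mathlib

section
/- For every real number z, exp(-z) - 1 + z ≥ z² / (2 + |z|). -/
lemma aux_quad (w : ℝ) (hw : 0 ≤ w) : 1 + w + w ^ 2 / 2 ≤ Real.exp w := by
  have h : MonotoneOn (fun w : ℝ => Real.exp w - (1 + w + w ^ 2 / 2)) (Set.Ici 0) := by
    apply monotoneOn_of_deriv_nonneg (convex_Ici 0)
    · fun_prop
    · fun_prop
    · intro x hx
      have hx' : (0:ℝ) ≤ x := le_of_lt (by simpa using hx)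
      have hq : HasDerivAt (fun w : ℝ => Real.exp w - (1 + w + w ^ 2 / 2))
          (Real.exp x - (1 + x)) x := by
        have := ((Real.hasDerivAt_exp x).sub
          (((hasDerivAt_const x (1:ℝ)).add (hasDerivAt_id x)).add
            (((hasDerivAt_pow 2 x)).div_const 2)))
        exact this.congr_deriv (by norm_num)
      rw [hq.deriv]
      have := Real.add_one_le_exp x
      linarith
  have := h (Set.self_mem_Ici) (Set.mem_Ici.mpr hw) hw
  simp at this
  linarith

lemma aux_g (z : ℝ) (hz : 0 ≤ z) : 2 - z ≤ Real.exp (-z) * (2 + z) := by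
  have h : MonotoneOn (fun z : ℝ => Real.exp (-z) * (2 + z) - (2 - z)) (Set.Ici 0) := by
    apply monotoneOn_of_deriv_nonneg (convex_Ici 0)
    · fun_prop
    · fun_prop
    · intro x hx
      have hx' : (0:ℝ) ≤ x := le_of_lt (by simpa using hx)
      have hd : deriv (fun z : ℝ => Real.exp (-z) * (2 + z) - (2 - z)) x
          = -Real.exp (-x) * (2 + x) + Real.exp (-x) + 1 := by
        have h1 : HasDerivAt (fun z : ℝ => Real.exp (-z)) (-Real.exp (-x)) x := by
          simpa using (hasDerivAt_neg x).exp
        have h2 : HasDerivAt (fun z : ℝ => Real.exp (-z) * (2 + z) - (2 - z))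
            (-Real.exp (-x) * (2 + x) + Real.exp (-x) * (0 + 1) - (0 - 1)) x := by
          exact ((h1.mul ((hasDerivAt_const x (2:ℝ)).add (hasDerivAt_id' x))).sub
            ((hasDerivAt_const x (2:ℝ)).sub (hasDerivAt_id' x)))
        rw [h2.deriv]; ring
      rw [hd]
      have h3 : (1 + x) * Real.exp (-x) ≤ 1 := by
        have h4 := Real.add_one_le_exp x
        have h5 : (0:ℝ) < Real.exp (-x) := Real.exp_pos _
        have h6 : Real.exp x * Real.exp (-x) = 1 := by
          rw [← Real.exp_add]; simp
        nlinarith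
      nlinarith
  have := h (Set.self_mem_Ici) (Set.mem_Ici.mpr hz) hz
  simp at this
  linarith

/-- For every real number `z`, `exp(-z) - 1 + z ≥ z² / (2 + |z|)`. -/
theorem exp_neg_sub_one_add_ge (z : ℝ) :
    Real.exp (-z) - 1 + z ≥ z ^ 2 / (2 + |z|) := by
  rcases le_or_gt 0 z with hz | hz
  · rw [abs_of_nonneg hz, ge_iff_le, div_le_iff₀ (by linarith)]
    have := aux_g z hz
    nlinarith
  · rw [abs_of_neg hz, ge_iff_le, div_le_iff₀ (by linarith)]
    have := aux_quad (-z) (by linarith)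
    nlinarith
end

section
/- Under the setting where x has density f(x; Θ*) ∝ exp(⟨⟨Θ*, Φ(x)⟩⟩) on a bounded support X, and writing L(Θ) = E_{f(·;Θ*)}[exp(−⟨⟨Θ, Φ̄(x)⟩⟩)] with Φ̄ the statistics centered with respect to the uniform distribution U_X on X, the following identity holds for every Θ: KL(U_X ‖ f(·; Θ*−Θ)) = KL(U_X ‖ f(·; Θ*)) + log L(Θ). -/
open scoped BigOperators
open MeasureTheory

/-- The Frobenius inner product `⟨⟨A,B⟩⟩ = Σ_{ij} A_{ij} B_{ij}`. -/
def frobInner {k1 k2 : ℕ} (A B : Matrix (Fin k1) (Fin k2) ℝ) : ℝ :=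
  ∑ i : Fin k1, ∑ j : Fin k2, A i j * B i j

/-- The mean of the natural statistic `Φ` under the uniform distribution on `X`. -/
noncomputable def uniformMean {p k1 k2 : ℕ} (X : Set (Fin p → ℝ))
    (Φ : (Fin p → ℝ) → Matrix (Fin k1) (Fin k2) ℝ) : Matrix (Fin k1) (Fin k2) ℝ :=
  fun u v => (volume X).toReal⁻¹ * ∫ y in X, Φ y u v

/-- The exponential family density `f(x; η) ∝ exp(⟨⟨η, Φ(x)⟩⟩)` on `X`. -/
noncomputable def expFamDensity {p k1 k2 : ℕ} (X : Set (Fin p → ℝ))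
    (Φ : (Fin p → ℝ) → Matrix (Fin k1) (Fin k2) ℝ)
    (η : Matrix (Fin k1) (Fin k2) ℝ) (x : Fin p → ℝ) : ℝ :=
  Real.exp (frobInner η (Φ x)) / ∫ y in X, Real.exp (frobInner η (Φ y))

/-- The KL divergence of the uniform density on `X` from a density `g` on `X`. -/
noncomputable def klUniform {p : ℕ} (X : Set (Fin p → ℝ))
    (g : (Fin p → ℝ) → ℝ) : ℝ :=
  ∫ x in X, (volume X).toReal⁻¹ * Real.log ((volume X).toReal⁻¹ / g x)

/-- The population loss `L(Θ) = E_{f(·;Θ*)}[exp(−⟨⟨Θ, Φ̄(x)⟩⟩)]`. -/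
noncomputable def popLoss {p k1 k2 : ℕ} (X : Set (Fin p → ℝ))
    (Φ : (Fin p → ℝ) → Matrix (Fin k1) (Fin k2) ℝ)
    (Θstar Θ : Matrix (Fin k1) (Fin k2) ℝ) : ℝ :=
  ∫ x in X, expFamDensity X Φ Θstar x *
    Real.exp (-(frobInner Θ (Φ x - uniformMean X Φ)))

namespace KLAux

variable {p k1 k2 : ℕ} {X : Set (Fin p → ℝ)} {Φ : (Fin p → ℝ) → Matrix (Fin k1) (Fin k2) ℝ}

lemma frob_sub_left (A B C : Matrix (Fin k1) (Fin k2) ℝ) :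
    frobInner (A - B) C = frobInner A C - frobInner B C := by
  simp [frobInner, Matrix.sub_apply, sub_mul, Finset.sum_sub_distrib]

lemma frob_sub_right (A B C : Matrix (Fin k1) (Fin k2) ℝ) :
    frobInner A (B - C) = frobInner A B - frobInner A C := by
  simp [frobInner, Matrix.sub_apply, mul_sub, Finset.sum_sub_distrib]

lemma frob_meas (hΦ : ∀ u v, Measurable fun x => Φ x u v) (η : Matrix (Fin k1) (Fin k2) ℝ) :
    Measurable fun x => frobInner η (Φ x) := by
  unfold frobInner
  exact Finset.measurable_sum _ fun i _ => Finset.measurable_sum _ fun j _ => (hΦ i j).const_mul _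

lemma frob_bound {φmax : ℝ} (hΦbdd : ∀ x ∈ X, ∀ u v, |Φ x u v| ≤ φmax)
    (η : Matrix (Fin k1) (Fin k2) ℝ) {x : Fin p → ℝ} (hx : x ∈ X) :
    |frobInner η (Φ x)| ≤ ∑ i : Fin k1, ∑ j : Fin k2, |η i j| * φmax := by
  calc |frobInner η (Φ x)| ≤ ∑ i : Fin k1, |∑ j : Fin k2, η i j * Φ x i j| :=
        Finset.abs_sum_le_sum_abs _ _
    _ ≤ ∑ i : Fin k1, ∑ j : Fin k2, |η i j * Φ x i j| :=
        Finset.sum_le_sum fun i _ => Finset.abs_sum_le_sum_abs _ _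
    _ ≤ ∑ i : Fin k1, ∑ j : Fin k2, |η i j| * φmax := by
        refine Finset.sum_le_sum fun i _ => Finset.sum_le_sum fun j _ => ?_
        rw [abs_mul]
        exact mul_le_mul_of_nonneg_left (hΦbdd x hx i j) (abs_nonneg _)

lemma integrable_comp (hXmeas : MeasurableSet X) (hvol_fin : volume X < ⊤)
    (hΦ : ∀ u v, Measurable fun x => Φ x u v)
    {φmax : ℝ} (hΦbdd : ∀ x ∈ X, ∀ u v, |Φ x u v| ≤ φmax) (u : Fin k1) (v : Fin k2) :
    IntegrableOn (fun x => Φ x u v) X := by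
  haveI := Fact.mk hvol_fin
  refine ⟨(hΦ u v).aestronglyMeasurable, ?_⟩
  refine HasFiniteIntegral.of_bounded (C := φmax) ?_
  filter_upwards [ae_restrict_mem hXmeas] with x hx
  simpa using hΦbdd x hx u v

lemma integrable_frob (hXmeas : MeasurableSet X) (hvol_fin : volume X < ⊤)
    (hΦ : ∀ u v, Measurable fun x => Φ x u v)
    {φmax : ℝ} (hΦbdd : ∀ x ∈ X, ∀ u v, |Φ x u v| ≤ φmax) (η : Matrix (Fin k1) (Fin k2) ℝ) :
    IntegrableOn (fun x => frobInner η (Φ x)) X := by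
  haveI := Fact.mk hvol_fin
  refine ⟨((frob_meas hΦ η)).aestronglyMeasurable, ?_⟩
  refine HasFiniteIntegral.of_bounded (C := ∑ i : Fin k1, ∑ j : Fin k2, |η i j| * φmax) ?_
  filter_upwards [ae_restrict_mem hXmeas] with x hx
  simpa using frob_bound hΦbdd η hx

lemma integrable_exp_frob (hXmeas : MeasurableSet X) (hvol_fin : volume X < ⊤)
    (hΦ : ∀ u v, Measurable fun x => Φ x u v)
    {φmax : ℝ} (hΦbdd : ∀ x ∈ X, ∀ u v, |Φ x u v| ≤ φmax) (η : Matrix (Fin k1) (Fin k2) ℝ) :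
    IntegrableOn (fun x => Real.exp (frobInner η (Φ x))) X := by
  haveI := Fact.mk hvol_fin
  refine ⟨((frob_meas hΦ η).exp).aestronglyMeasurable, ?_⟩
  refine HasFiniteIntegral.of_bounded (C := Real.exp (∑ i : Fin k1, ∑ j : Fin k2, |η i j| * φmax)) ?_
  filter_upwards [ae_restrict_mem hXmeas] with x hx
  rw [Real.norm_eq_abs, abs_of_pos (Real.exp_pos _)]
  exact Real.exp_le_exp.mpr (le_trans (le_abs_self _) (frob_bound hΦbdd η hx))

lemma Z_pos (hXmeas : MeasurableSet X) (hvol_pos : 0 < volume X) (hvol_fin : volume X < ⊤)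
    (hΦ : ∀ u v, Measurable fun x => Φ x u v)
    {φmax : ℝ} (hΦbdd : ∀ x ∈ X, ∀ u v, |Φ x u v| ≤ φmax) (η : Matrix (Fin k1) (Fin k2) ℝ) :
    0 < ∫ y in X, Real.exp (frobInner η (Φ y)) := by
  haveI := Fact.mk hvol_fin
  rw [integral_pos_iff_support_of_nonneg_ae
    (by filter_upwards with x using (Real.exp_pos _).le)
    (integrable_exp_frob hXmeas hvol_fin hΦ hΦbdd η)]
  have hs : (Function.support fun y => Real.exp (frobInner η (Φ y))) = Set.univ := by
    ext y; simp [Function.support, Real.exp_ne_zero]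
  rw [hs]
  simpa [Measure.restrict_apply_univ] using hvol_pos

lemma integral_frob_eq (hXmeas : MeasurableSet X) (hvol_fin : volume X < ⊤)
    (hΦ : ∀ u v, Measurable fun x => Φ x u v)
    {φmax : ℝ} (hΦbdd : ∀ x ∈ X, ∀ u v, |Φ x u v| ≤ φmax) (η : Matrix (Fin k1) (Fin k2) ℝ) :
    ∫ x in X, frobInner η (Φ x) = ∑ i : Fin k1, ∑ j : Fin k2, η i j * ∫ x in X, Φ x i j := by
  have hint : ∀ i j, IntegrableOn (fun x => Φ x i j) X :=
    fun i j => integrable_comp hXmeas hvol_fin hΦ hΦbdd i j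
  unfold frobInner
  rw [integral_finset_sum _ (fun i _ => integrable_finset_sum _ fun j _ => (hint i j).const_mul (η i j))]
  refine Finset.sum_congr rfl fun i _ => ?_
  rw [integral_finset_sum _ (fun j _ => (hint i j).const_mul _)]
  exact Finset.sum_congr rfl fun j _ => integral_const_mul _ _

lemma kl_formula (hXmeas : MeasurableSet X) (hvol_pos : 0 < volume X) (hvol_fin : volume X < ⊤)
    (hΦ : ∀ u v, Measurable fun x => Φ x u v)
    {φmax : ℝ} (hΦbdd : ∀ x ∈ X, ∀ u v, |Φ x u v| ≤ φmax) (η : Matrix (Fin k1) (Fin k2) ℝ) :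
    klUniform X (expFamDensity X Φ η) =
      -Real.log (volume X).toReal - frobInner η (uniformMean X Φ)
        + Real.log (∫ y in X, Real.exp (frobInner η (Φ y))) := by
  haveI := Fact.mk hvol_fin
  set V := (volume X).toReal with hV
  have hVpos : 0 < V := ENNReal.toReal_pos hvol_pos.ne' hvol_fin.ne
  set Zη := ∫ y in X, Real.exp (frobInner η (Φ y)) with hZ
  have hZpos : 0 < Zη := Z_pos hXmeas hvol_pos hvol_fin hΦ hΦbdd η
  have key : ∀ x, V⁻¹ * Real.log (V⁻¹ / expFamDensity X Φ η x)
      = V⁻¹ * (Real.log Zη - Real.log V) - V⁻¹ * frobInner η (Φ x) := by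
    intro x
    unfold expFamDensity
    rw [← hZ, Real.log_div (by positivity) (by positivity),
      Real.log_div (Real.exp_ne_zero _) hZpos.ne', Real.log_exp, Real.log_inv]
    ring
  unfold klUniform
  rw [← hV]
  simp only [key]
  rw [integral_sub (integrable_const _)
    ((integrable_frob hXmeas hvol_fin hΦ hΦbdd η).const_mul _),
    setIntegral_const, integral_const_mul,
    integral_frob_eq hXmeas hvol_fin hΦ hΦbdd η]
  have hmean : frobInner η (uniformMean X Φ)
      = V⁻¹ * ∑ i : Fin k1, ∑ j : Fin k2, η i j * ∫ x in X, Φ x i j := by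
    unfold frobInner uniformMean
    rw [Finset.mul_sum]
    refine Finset.sum_congr rfl fun i _ => ?_
    rw [Finset.mul_sum]
    exact Finset.sum_congr rfl fun j _ => by rw [← hV]; ring
  rw [hmean, measureReal_def, ← hV, smul_eq_mul]
  field_simp
  ring

lemma popLoss_eq (hXmeas : MeasurableSet X) (hvol_pos : 0 < volume X) (hvol_fin : volume X < ⊤)
    (hΦ : ∀ u v, Measurable fun x => Φ x u v)
    {φmax : ℝ} (hΦbdd : ∀ x ∈ X, ∀ u v, |Φ x u v| ≤ φmax)
    (Θstar Θ : Matrix (Fin k1) (Fin k2) ℝ) :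
    popLoss X Φ Θstar Θ =
      (Real.exp (frobInner Θ (uniformMean X Φ)) / ∫ y in X, Real.exp (frobInner Θstar (Φ y)))
        * ∫ y in X, Real.exp (frobInner (Θstar - Θ) (Φ y)) := by
  set Zs := ∫ y in X, Real.exp (frobInner Θstar (Φ y)) with hZs
  have key : ∀ x, expFamDensity X Φ Θstar x * Real.exp (-(frobInner Θ (Φ x - uniformMean X Φ)))
      = (Real.exp (frobInner Θ (uniformMean X Φ)) / Zs) * Real.exp (frobInner (Θstar - Θ) (Φ x)) := by
    intro x
    unfold expFamDensity
    rw [← hZs, frob_sub_right, frob_sub_left, div_mul_eq_mul_div, div_mul_eq_mul_div,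
      ← Real.exp_add, ← Real.exp_add]
    congr 2
    ring
  unfold popLoss
  simp only [key]
  rw [integral_const_mul]

end KLAux

/-- The identity `KL(U_X ‖ f(·; Θ*−Θ)) = KL(U_X ‖ f(·; Θ*)) + log L(Θ)`. -/
theorem kl_decomposition (p k1 k2 : ℕ)
    (X : Set (Fin p → ℝ)) (hXmeas : MeasurableSet X)
    (hXbdd : Bornology.IsBounded X)
    (hvol_pos : 0 < volume X) (hvol_fin : volume X < ⊤)
    (Φ : (Fin p → ℝ) → Matrix (Fin k1) (Fin k2) ℝ)
    (hΦmeas : ∀ u v, Measurable fun x => Φ x u v)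
    (φmax : ℝ) (hΦbdd : ∀ x ∈ X, ∀ u v, |Φ x u v| ≤ φmax)
    (Θstar Θ : Matrix (Fin k1) (Fin k2) ℝ) :
    klUniform X (expFamDensity X Φ (Θstar - Θ)) =
      klUniform X (expFamDensity X Φ Θstar) + Real.log (popLoss X Φ Θstar Θ) := by
  have hZs := KLAux.Z_pos hXmeas hvol_pos hvol_fin hΦmeas hΦbdd Θstar
  have hZd := KLAux.Z_pos hXmeas hvol_pos hvol_fin hΦmeas hΦbdd (Θstar - Θ)
  rw [KLAux.kl_formula hXmeas hvol_pos hvol_fin hΦmeas hΦbdd (Θstar - Θ),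
      KLAux.kl_formula hXmeas hvol_pos hvol_fin hΦmeas hΦbdd Θstar,
      KLAux.popLoss_eq hXmeas hvol_pos hvol_fin hΦmeas hΦbdd Θstar Θ,
      Real.log_mul (by positivity) hZd.ne',
      Real.log_div (Real.exp_ne_zero _) hZs.ne', Real.log_exp,
      KLAux.frob_sub_left]
  ring
end

section
/- Suppose the exponential family {f(·; η) ∝ exp(⟨⟨η, Φ(·)⟩⟩) on X} is minimal, i.e., no nonzero matrix U satisfies ⟨⟨U, Φ(x)⟩⟩ constant on X. Then Θ* is the unique minimizer over the parameter set Λ of L(Θ) = E_{f(·;Θ*)}[exp(−⟨⟨Θ, Φ̄(x)⟩⟩)], where Φ̄ is the statistic centered under the uniform distribution on X. -/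
open scoped BigOperators
open MeasureTheory

lemma frobInner_sub_right {k1 k2 : ℕ} (A B C : Matrix (Fin k1) (Fin k2) ℝ) :
    frobInner A (B - C) = frobInner A B - frobInner A C := by
  simp [frobInner, Matrix.sub_apply, mul_sub, Finset.sum_sub_distrib]

lemma frobInner_sub_left {k1 k2 : ℕ} (A B C : Matrix (Fin k1) (Fin k2) ℝ) :
    frobInner (A - B) C = frobInner A C - frobInner B C := by
  simp [frobInner, Matrix.sub_apply, sub_mul, Finset.sum_sub_distrib]

lemma frobInner_zero_left {k1 k2 : ℕ} (C : Matrix (Fin k1) (Fin k2) ℝ) :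
    frobInner 0 C = 0 := by
  simp [frobInner]

lemma measurable_frob {p k1 k2 : ℕ} {Φ : (Fin p → ℝ) → Matrix (Fin k1) (Fin k2) ℝ}
    (hΦmeas : ∀ u v, Measurable fun x => Φ x u v) (η : Matrix (Fin k1) (Fin k2) ℝ) :
    Measurable fun x => frobInner η (Φ x) := by
  unfold frobInner
  exact Finset.measurable_sum _ fun i _ => Finset.measurable_sum _ fun j _ =>
    (measurable_const.mul (hΦmeas i j))

lemma frob_abs_bound {p k1 k2 : ℕ} {X : Set (Fin p → ℝ)}
    {Φ : (Fin p → ℝ) → Matrix (Fin k1) (Fin k2) ℝ} {φmax : ℝ}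
    (hΦbdd : ∀ x ∈ X, ∀ u v, |Φ x u v| ≤ φmax)
    (η : Matrix (Fin k1) (Fin k2) ℝ) {x : Fin p → ℝ} (hx : x ∈ X) :
    |frobInner η (Φ x)| ≤ (∑ i : Fin k1, ∑ j : Fin k2, |η i j|) * φmax := by
  unfold frobInner
  calc |∑ i : Fin k1, ∑ j : Fin k2, η i j * Φ x i j|
      ≤ ∑ i : Fin k1, ∑ j : Fin k2, |η i j * Φ x i j| := by
        refine (Finset.abs_sum_le_sum_abs _ _).trans ?_
        exact Finset.sum_le_sum fun i _ => Finset.abs_sum_le_sum_abs _ _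
    _ ≤ ∑ i : Fin k1, ∑ j : Fin k2, |η i j| * φmax := by
        refine Finset.sum_le_sum fun i _ => Finset.sum_le_sum fun j _ => ?_
        rw [abs_mul]
        exact mul_le_mul_of_nonneg_left (hΦbdd x hx i j) (abs_nonneg _)
    _ = (∑ i : Fin k1, ∑ j : Fin k2, |η i j|) * φmax := by
        rw [Finset.sum_mul]; exact Finset.sum_congr rfl fun i _ => (Finset.sum_mul _ _ _).symm

lemma integrable_exp_frob {p k1 k2 : ℕ} {X : Set (Fin p → ℝ)} (hXmeas : MeasurableSet X)
    (hvol_fin : volume X < ⊤)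
    {Φ : (Fin p → ℝ) → Matrix (Fin k1) (Fin k2) ℝ}
    (hΦmeas : ∀ u v, Measurable fun x => Φ x u v)
    {φmax : ℝ} (hΦbdd : ∀ x ∈ X, ∀ u v, |Φ x u v| ≤ φmax)
    (η : Matrix (Fin k1) (Fin k2) ℝ) :
    IntegrableOn (fun x => Real.exp (frobInner η (Φ x))) X := by
  have : IsFiniteMeasure (volume.restrict X) :=
    ⟨by rwa [Measure.restrict_apply_univ]⟩
  refine Integrable.mono' (integrable_const (Real.exp ((∑ i : Fin k1, ∑ j : Fin k2, |η i j|) * φmax)))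
    ((Real.measurable_exp.comp (measurable_frob hΦmeas η)).aestronglyMeasurable) ?_
  filter_upwards [ae_restrict_mem hXmeas] with x hx
  rw [Real.norm_eq_abs, Real.abs_exp]
  exact Real.exp_le_exp.mpr (le_of_abs_le (frob_abs_bound hΦbdd η hx))

lemma integrable_frob {p k1 k2 : ℕ} {X : Set (Fin p → ℝ)} (hXmeas : MeasurableSet X)
    (hvol_fin : volume X < ⊤)
    {Φ : (Fin p → ℝ) → Matrix (Fin k1) (Fin k2) ℝ}
    (hΦmeas : ∀ u v, Measurable fun x => Φ x u v)
    {φmax : ℝ} (hΦbdd : ∀ x ∈ X, ∀ u v, |Φ x u v| ≤ φmax)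
    (η : Matrix (Fin k1) (Fin k2) ℝ) :
    IntegrableOn (fun x => frobInner η (Φ x)) X := by
  have : IsFiniteMeasure (volume.restrict X) :=
    ⟨by rwa [Measure.restrict_apply_univ]⟩
  refine Integrable.mono' (integrable_const ((∑ i : Fin k1, ∑ j : Fin k2, |η i j|) * φmax))
    (measurable_frob hΦmeas η).aestronglyMeasurable ?_
  filter_upwards [ae_restrict_mem hXmeas] with x hx
  exact frob_abs_bound hΦbdd η hx

lemma integrable_comp {p k1 k2 : ℕ} {X : Set (Fin p → ℝ)} (hXmeas : MeasurableSet X)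
    (hvol_fin : volume X < ⊤)
    {Φ : (Fin p → ℝ) → Matrix (Fin k1) (Fin k2) ℝ}
    (hΦmeas : ∀ u v, Measurable fun x => Φ x u v)
    {φmax : ℝ} (hΦbdd : ∀ x ∈ X, ∀ u v, |Φ x u v| ≤ φmax)
    (i : Fin k1) (j : Fin k2) :
    IntegrableOn (fun x => Φ x i j) X := by
  have : IsFiniteMeasure (volume.restrict X) :=
    ⟨by rwa [Measure.restrict_apply_univ]⟩
  refine Integrable.mono' (integrable_const φmax)
    (hΦmeas i j).aestronglyMeasurable ?_
  filter_upwards [ae_restrict_mem hXmeas] with x hx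
  exact hΦbdd x hx i j

/-- Strict Jensen-type inequality via `e^t ≥ 1 + t`. -/
lemma key_ineq {α : Type*} [MeasurableSpace α] (μ : Measure α) [IsFiniteMeasure μ]
    (g : α → ℝ) (hg : Integrable g μ) (hexp : Integrable (fun x => Real.exp (g x)) μ)
    (hzero : ∫ x, g x ∂μ = 0) (hne : ¬ (g =ᵐ[μ] 0)) :
    (μ Set.univ).toReal < ∫ x, Real.exp (g x) ∂μ := by
  set h : α → ℝ := fun x => Real.exp (g x) - 1 - g x with hh
  have hint : Integrable h μ := (hexp.sub (integrable_const 1)).sub hg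
  have hnn : 0 ≤ᵐ[μ] h := Filter.Eventually.of_forall fun x => by
    have := Real.add_one_le_exp (g x); simp only [h, Pi.zero_apply]; linarith
  have hpos : 0 < ∫ x, h x ∂μ := by
    rcases lt_or_eq_of_le (integral_nonneg_of_ae hnn) with hlt | heq
    · exact hlt
    · exfalso
      have hz := (integral_eq_zero_iff_of_nonneg_ae hnn hint).mp heq.symm
      apply hne
      filter_upwards [hz] with x hx
      by_contra hgx
      have := Real.add_one_lt_exp hgx
      simp only [h, Pi.zero_apply] at hx ⊢
      have : Real.exp (g x) - 1 - g x = 0 := hx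
      nlinarith [Real.add_one_lt_exp hgx]
  have e2 : ∫ x, h x ∂μ = (∫ x, (Real.exp (g x) - 1) ∂μ) - ∫ x, g x ∂μ :=
    integral_sub (hexp.sub (integrable_const 1)) hg
  have e1 : ∫ x, (Real.exp (g x) - 1) ∂μ = (∫ x, Real.exp (g x) ∂μ) - (μ Set.univ).toReal := by
    rw [integral_sub hexp (integrable_const 1)]
    simp
    rfl
  rw [e2, e1, hzero] at hpos
  linarith


/-- If the exponential family is minimal, then `Θ*` is the unique minimizer of
the population loss `L(Θ)` over the parameter set `Λ`. -/
theorem popLoss_unique_minimizer (p k1 k2 : ℕ)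
    (X : Set (Fin p → ℝ)) (hXmeas : MeasurableSet X)
    (hXbdd : Bornology.IsBounded X)
    (hvol_pos : 0 < volume X) (hvol_fin : volume X < ⊤)
    (Φ : (Fin p → ℝ) → Matrix (Fin k1) (Fin k2) ℝ)
    (hΦmeas : ∀ u v, Measurable fun x => Φ x u v)
    (φmax : ℝ) (hΦbdd : ∀ x ∈ X, ∀ u v, |Φ x u v| ≤ φmax)
    (hminimal : ∀ (U : Matrix (Fin k1) (Fin k2) ℝ) (c : ℝ),
      (∀ᵐ x ∂(volume.restrict X), frobInner U (Φ x) = c) → U = 0)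
    (Λ : Set (Matrix (Fin k1) (Fin k2) ℝ)) (hΛ : Convex ℝ Λ)
    (Θstar : Matrix (Fin k1) (Fin k2) ℝ) (hΘstar : Θstar ∈ Λ) :
    ∀ Θ ∈ Λ, Θ ≠ Θstar →
      popLoss X Φ Θstar Θstar < popLoss X Φ Θstar Θ := by
  intro Θ hΘ hne
  have hfin : IsFiniteMeasure (volume.restrict X) :=
    ⟨by rwa [Measure.restrict_apply_univ]⟩
  set μM := uniformMean X Φ with hμM
  set Z : ℝ := ∫ y in X, Real.exp (frobInner Θstar (Φ y)) with hZ
  have hvolR : 0 < (volume X).toReal := ENNReal.toReal_pos hvol_pos.ne' hvol_fin.ne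
  -- Z > 0
  have hZpos : 0 < Z := by
    rw [hZ]
    rw [setIntegral_pos_iff_support_of_nonneg_ae
      (Filter.Eventually.of_forall fun x => (Real.exp_pos _).le)
      (integrable_exp_frob hXmeas hvol_fin hΦmeas hΦbdd Θstar)]
    have : (Function.support fun x => Real.exp (frobInner Θstar (Φ x))) = Set.univ := by
      ext x; simp [Function.support, (Real.exp_pos _).ne']
    rw [this, Set.univ_inter]
    exact hvol_pos
  -- rewrite popLoss
  have hrw : ∀ Θ' : Matrix (Fin k1) (Fin k2) ℝ, popLoss X Φ Θstar Θ' =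
      (Real.exp (frobInner Θstar μM) / Z) *
        ∫ x in X, Real.exp (frobInner (Θstar - Θ') (Φ x - μM)) := by
    intro Θ'
    unfold popLoss expFamDensity
    rw [← integral_const_mul]
    refine setIntegral_congr_fun hXmeas fun x _ => ?_
    rw [← hZ, ← hμM]
    rw [div_mul_eq_mul_div, ← Real.exp_add, div_mul_eq_mul_div, ← Real.exp_add]
    congr 1
    rw [frobInner_sub_left, frobInner_sub_right, frobInner_sub_right]
    ring
  -- set η and g
  set η := Θstar - Θ with hη
  have hηne : η ≠ 0 := sub_ne_zero.mpr (Ne.symm hne)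
  -- the integral identity: ∫_X Φ x i j = |X| * μM i j
  have hcomp : ∀ i j, ∫ x in X, Φ x i j = (volume X).toReal * μM i j := by
    intro i j
    rw [hμM]
    unfold uniformMean
    rw [← mul_assoc, mul_inv_cancel₀ hvolR.ne', one_mul]
  -- ∫ g = 0
  have hgint : IntegrableOn (fun x => frobInner η (Φ x - μM)) X := by
    have : (fun x => frobInner η (Φ x - μM)) =
        fun x => frobInner η (Φ x) - frobInner η μM := by
      funext x; rw [frobInner_sub_right]
    rw [this]
    exact (integrable_frob hXmeas hvol_fin hΦmeas hΦbdd η).sub (integrable_const _)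
  have hzero : ∫ x in X, frobInner η (Φ x - μM) = 0 := by
    have h1 : ∫ x in X, frobInner η (Φ x - μM) =
        (∫ x in X, frobInner η (Φ x)) - frobInner η μM * (volume X).toReal := by
      have : (fun x => frobInner η (Φ x - μM)) =
          fun x => frobInner η (Φ x) - frobInner η μM := by
        funext x; rw [frobInner_sub_right]
      rw [this, integral_sub (integrable_frob hXmeas hvol_fin hΦmeas hΦbdd η)
        (integrable_const _), setIntegral_const, smul_eq_mul, mul_comm]
      rfl
    have hInner : ∀ i : Fin k1, ∫ x in X, (∑ j : Fin k2, η i j * Φ x i j) =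
        ∑ j : Fin k2, η i j * ((volume X).toReal * μM i j) := by
      intro i
      rw [integral_finset_sum _ (fun j _ =>
        Integrable.const_mul (integrable_comp hXmeas hvol_fin hΦmeas hΦbdd i j) (η i j))]
      exact Finset.sum_congr rfl fun j _ => by rw [integral_const_mul, hcomp i j]
    have h2 : ∫ x in X, frobInner η (Φ x) = (volume X).toReal * frobInner η μM := by
      unfold frobInner
      rw [integral_finset_sum _ (fun i _ => integrable_finset_sum _ (fun j _ =>
        Integrable.const_mul (integrable_comp hXmeas hvol_fin hΦmeas hΦbdd i j) (η i j)))]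
      rw [Finset.mul_sum]
      refine Finset.sum_congr rfl fun i _ => ?_
      rw [hInner i, Finset.mul_sum]
      exact Finset.sum_congr rfl fun j _ => by ring
    rw [h1, h2]; ring
  -- exp(g) integrable
  have hexpint : IntegrableOn (fun x => Real.exp (frobInner η (Φ x - μM))) X := by
    have : (fun x => Real.exp (frobInner η (Φ x - μM))) =
        fun x => Real.exp (-(frobInner η μM)) * Real.exp (frobInner η (Φ x)) := by
      funext x; rw [← Real.exp_add, frobInner_sub_right]; ring_nf
    rw [this]
    exact (integrable_exp_frob hXmeas hvol_fin hΦmeas hΦbdd η).const_mul _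
  -- g not a.e. zero
  have hgne : ¬ ((fun x => frobInner η (Φ x - μM)) =ᵐ[volume.restrict X] 0) := by
    intro hae
    apply hηne
    refine hminimal η (frobInner η μM) ?_
    filter_upwards [hae] with x hx
    simp only [Pi.zero_apply] at hx
    rw [frobInner_sub_right] at hx
    linarith
  -- key inequality
  have hkey : (volume X).toReal < ∫ x in X, Real.exp (frobInner η (Φ x - μM)) := by
    have := key_ineq (volume.restrict X) (fun x => frobInner η (Φ x - μM))
      hgint hexpint hzero hgne
    rwa [Measure.restrict_apply_univ] at this
  -- conclude
  rw [hrw Θ, hrw Θstar]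
  have hstar0 : ∫ x in X, Real.exp (frobInner (Θstar - Θstar) (Φ x - μM)) =
      (volume X).toReal := by
    simp [sub_self, frobInner_zero_left]
    rfl
  rw [hstar0, ← hη]
  exact mul_lt_mul_of_pos_left hkey (div_pos (Real.exp_pos _) hZpos)
end

section
/- Let Δ ∈ ℝ^{k1×k2} satisfy ‖Δ‖_{1,1} ≤ γ ‖Δ‖_F, let H ∈ ℝ^{(k1k2)×(k1k2)} be a symmetric matrix with minimum eigenvalue λ_min > 0, and let Ĥ be a symmetric matrix with ‖Ĥ − H‖_max ≤ λ_min/(2γ²) entrywise. Then vec(Δ)ᵀ Ĥ vec(Δ) ≥ (λ_min/2) ‖Δ‖_F². -/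
open scoped BigOperators
open Matrix

lemma aux_quad_lb {n : Type*} [Fintype n] [DecidableEq n]
    (A : Matrix n n ℝ) (hA : A.IsHermitian) (c : ℝ)
    (h : ∀ i, c ≤ hA.eigenvalues i) (v : n → ℝ) :
    c * (v ⬝ᵥ v) ≤ v ⬝ᵥ A *ᵥ v := by
  have hpsd : (A - c • 1).PosSemidef := by
    have hspec := hA.spectral_theorem
    have hU : (hA.eigenvectorUnitary : Matrix n n ℝ) * star (hA.eigenvectorUnitary : Matrix n n ℝ) = 1 :=
      (Matrix.mem_unitaryGroup_iff).mp hA.eigenvectorUnitary.2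
    have key : A - c • 1 =
        (hA.eigenvectorUnitary : Matrix n n ℝ) *
          Matrix.diagonal (fun i => hA.eigenvalues i - c) *
          star (hA.eigenvectorUnitary : Matrix n n ℝ) := by
      have : Matrix.diagonal (fun i => hA.eigenvalues i - c) =
          Matrix.diagonal (RCLike.ofReal ∘ hA.eigenvalues) - c • 1 := by
        rw [Matrix.smul_one_eq_diagonal, Matrix.diagonal_sub]
        rfl
      rw [Unitary.conjStarAlgAut_apply] at hspec; rw [this, Matrix.mul_sub, Matrix.sub_mul, ← hspec]
      congr 1
      rw [Matrix.mul_smul, Matrix.smul_mul, mul_one, hU]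
    rw [key]
    exact (Matrix.posSemidef_diagonal_iff.mpr (fun i => sub_nonneg.mpr (h i))).mul_mul_conjTranspose_same _
  have h0 := hpsd.dotProduct_mulVec_nonneg v
  have hstar : star v = v := rfl
  rw [hstar, Matrix.sub_mulVec, dotProduct_sub] at h0
  have : (c • (1 : Matrix n n ℝ)) *ᵥ v = c • v := by
    rw [Matrix.smul_mulVec, Matrix.one_mulVec]
  rw [this, dotProduct_smul] at h0
  rw [smul_eq_mul] at h0; linarith

/-- If `‖Δ‖_{1,1} ≤ γ ‖Δ‖_F`, `H` is symmetric with all eigenvalues at least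
`λ_min > 0`, and `Ĥ` is symmetric with `‖Ĥ − H‖_max ≤ λ_min/(2γ²)`, then
`vec(Δ)ᵀ Ĥ vec(Δ) ≥ (λ_min/2) ‖Δ‖_F²`. -/
theorem quadratic_form_lower_bound (k1 k2 : ℕ)
    (Δ : Matrix (Fin k1) (Fin k2) ℝ) (γ : ℝ) (hγ : 0 < γ)
    (hΔ : ∑ i : Fin k1, ∑ j : Fin k2, |Δ i j| ≤
      γ * Real.sqrt (∑ i : Fin k1, ∑ j : Fin k2, (Δ i j) ^ 2))
    (H Hhat : Matrix (Fin k1 × Fin k2) (Fin k1 × Fin k2) ℝ)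
    (hH : H.IsHermitian) (hHhat : Hhat.IsHermitian)
    (lammin : ℝ) (hlam_pos : 0 < lammin)
    (hlam : ∀ a, lammin ≤ hH.eigenvalues a)
    (hdev : ∀ a b, |Hhat a b - H a b| ≤ lammin / (2 * γ ^ 2)) :
    (fun a : Fin k1 × Fin k2 => Δ a.1 a.2) ⬝ᵥ
        Hhat.mulVec (fun a : Fin k1 × Fin k2 => Δ a.1 a.2) ≥
      (lammin / 2) * ∑ i : Fin k1, ∑ j : Fin k2, (Δ i j) ^ 2 := by
  set v : Fin k1 × Fin k2 → ℝ := fun a => Δ a.1 a.2 with hv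
  set S : ℝ := ∑ i : Fin k1, ∑ j : Fin k2, (Δ i j) ^ 2 with hS
  set c : ℝ := lammin / (2 * γ ^ 2) with hc
  have hS_nonneg : 0 ≤ S := by
    apply Finset.sum_nonneg; intro i _; apply Finset.sum_nonneg; intro j _; positivity
  have hvv : v ⬝ᵥ v = S := by
    simp only [dotProduct, hv, hS]
    rw [← Finset.sum_product']
    simp [Fintype.sum_prod_type, sq]
  -- ℓ1 bound
  have hl1 : ∑ a : Fin k1 × Fin k2, |v a| = ∑ i : Fin k1, ∑ j : Fin k2, |Δ i j| := by
    rw [Fintype.sum_prod_type]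
  have hl1sq : (∑ a : Fin k1 × Fin k2, |v a|) ^ 2 ≤ γ ^ 2 * S := by
    rw [hl1]
    have h1 : 0 ≤ ∑ i : Fin k1, ∑ j : Fin k2, |Δ i j| := by
      apply Finset.sum_nonneg; intro i _; apply Finset.sum_nonneg; intro j _; positivity
    calc (∑ i : Fin k1, ∑ j : Fin k2, |Δ i j|) ^ 2
        ≤ (γ * Real.sqrt S) ^ 2 := by
          apply pow_le_pow_left₀ h1 hΔ
      _ = γ ^ 2 * S := by
          rw [mul_pow, Real.sq_sqrt hS_nonneg]
  -- quadratic form bound for H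
  have hHbound : lammin * S ≤ v ⬝ᵥ H *ᵥ v := by
    rw [← hvv]; exact aux_quad_lb H hH lammin hlam v
  -- perturbation bound
  have hpert : |v ⬝ᵥ (Hhat - H) *ᵥ v| ≤ c * (∑ a : Fin k1 × Fin k2, |v a|) ^ 2 := by
    have hc0 : 0 ≤ c := by positivity
    calc |v ⬝ᵥ (Hhat - H) *ᵥ v|
        ≤ ∑ a, |v a * ((Hhat - H) *ᵥ v) a| := Finset.abs_sum_le_sum_abs _ _
      _ ≤ ∑ a, |v a| * (∑ b, c * |v b|) := by
          apply Finset.sum_le_sum; intro a _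
          rw [abs_mul]
          apply mul_le_mul_of_nonneg_left _ (abs_nonneg _)
          calc |((Hhat - H) *ᵥ v) a| ≤ ∑ b, |(Hhat - H) a b * v b| :=
                Finset.abs_sum_le_sum_abs _ _
            _ ≤ ∑ b, c * |v b| := by
                apply Finset.sum_le_sum; intro b _
                rw [abs_mul]
                exact mul_le_mul_of_nonneg_right (hdev a b) (abs_nonneg _)
      _ = c * (∑ a, |v a|) ^ 2 := by
          rw [← Finset.mul_sum, ← Finset.sum_mul]
          ring
  have hpert2 : v ⬝ᵥ (Hhat - H) *ᵥ v ≥ -(lammin / 2 * S) := by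
    have h2 : c * (∑ a : Fin k1 × Fin k2, |v a|) ^ 2 ≤ c * (γ ^ 2 * S) := by
      apply mul_le_mul_of_nonneg_left hl1sq (by positivity)
    have h3 : c * (γ ^ 2 * S) = lammin / 2 * S := by
      rw [hc]; field_simp
    have := (abs_le.mp hpert).1
    linarith [h3 ▸ h2]
  have hsplit : v ⬝ᵥ Hhat *ᵥ v = v ⬝ᵥ H *ᵥ v + v ⬝ᵥ (Hhat - H) *ᵥ v := by
    rw [Matrix.sub_mulVec, dotProduct_sub]; ring
  show v ⬝ᵥ Hhat *ᵥ v ≥ lammin / 2 * S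
  rw [hsplit]
  linarith
end
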